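/- arXiv:1208.2062 — 5 statements merged into one kernel-verified Lean document; each statement's English description precedes it below -/
import Mathlib

section
/- For every τ_m > 0 and every real τ with |τ| ≤ τ_m, the error of replacing the Gaussian by its periodization satisfies 0 ≤ ∑_{k∈ℤ} exp(−(τ + 2kτ_m)²/4) − exp(−τ²/4) ≤ 2·∑_{k=1}^{∞} exp(−(2k−1)²τ_m²/4). -/
open Real

lemma pg_aux_g_summable (τm : ℝ) (hτm : 0 < τm) :
    Summable (fun k : ℕ => Real.exp (-(2 * (k : ℝ) + 1) ^ 2 * τm ^ 2 / 4)) := by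
  have hr : Real.exp (-(τm ^ 2) / 2) < 1 := by
    rw [Real.exp_lt_one_iff]
    nlinarith [sq_nonneg τm]
  have hgeom : Summable (fun n : ℕ => Real.exp (-(τm ^ 2) / 4) * Real.exp (-(τm ^ 2) / 2) ^ n) :=
    (summable_geometric_of_lt_one (Real.exp_nonneg _) hr).mul_left _
  refine Summable.of_nonneg_of_le (fun n => (Real.exp_nonneg _)) (fun n => ?_) hgeom
  rw [← Real.exp_nat_mul, ← Real.exp_add]
  apply Real.exp_le_exp.mpr
  have hn : (0:ℝ) ≤ (n:ℝ) := Nat.cast_nonneg n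
  nlinarith [sq_nonneg τm, sq_nonneg ((n:ℝ) * τm)]

lemma pg_term_le (τm : ℝ) (hτm : 0 < τm) (τ : ℝ) (hτ : |τ| ≤ τm) (n : ℕ) (k : ℤ)
    (hk : |(k : ℝ)| = (n : ℝ) + 1) :
    Real.exp (-(τ + 2 * k * τm) ^ 2 / 4) ≤ Real.exp (-(2 * (n : ℝ) + 1) ^ 2 * τm ^ 2 / 4) := by
  apply Real.exp_le_exp.mpr
  have h2 : |2 * (k:ℝ) * τm| - |τ| ≤ |τ + 2 * k * τm| := by
    have he : |2 * (k:ℝ) * τm| = |(τ + 2 * k * τm) + (-τ)| := by ring_nf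
    have ht := abs_add_le (τ + 2 * (k:ℝ) * τm) (-τ)
    rw [abs_neg] at ht
    rw [he]
    linarith
  have h3 : |2 * (k:ℝ) * τm| = 2 * ((n:ℝ) + 1) * τm := by
    rw [abs_mul, abs_mul, abs_of_pos hτm, hk]
    norm_num
  have h1 : (2 * (n : ℝ) + 1) * τm ≤ |τ + 2 * k * τm| := by
    rw [h3] at h2; linarith
  have hmain : (2 * (n : ℝ) + 1) ^ 2 * τm ^ 2 ≤ (τ + 2 * k * τm) ^ 2 := by
    calc (2 * (n : ℝ) + 1) ^ 2 * τm ^ 2 = ((2 * (n : ℝ) + 1) * τm) ^ 2 := by ring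
      _ ≤ |τ + 2 * k * τm| ^ 2 := pow_le_pow_left₀ (by positivity) h1 2
      _ = (τ + 2 * k * τm) ^ 2 := sq_abs _
  linarith

/-- For every `τm > 0` and every real `τ` with `|τ| ≤ τm`, the error of replacing the Gaussian
by its `2τm`-periodization satisfies
`0 ≤ ∑_{k∈ℤ} exp(−(τ + 2kτm)²/4) − exp(−τ²/4) ≤ 2·∑_{k=1}^∞ exp(−(2k−1)²τm²/4)`. -/
theorem periodized_gaussian_error_bound (τm : ℝ) (hτm : 0 < τm) (τ : ℝ) (hτ : |τ| ≤ τm) :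
    0 ≤ (∑' k : ℤ, Real.exp (-(τ + 2 * k * τm) ^ 2 / 4)) - Real.exp (-τ ^ 2 / 4) ∧
    (∑' k : ℤ, Real.exp (-(τ + 2 * k * τm) ^ 2 / 4)) - Real.exp (-τ ^ 2 / 4) ≤
      2 * ∑' k : ℕ, Real.exp (-(2 * (k : ℝ) + 1) ^ 2 * τm ^ 2 / 4) := by
  set f : ℤ → ℝ := fun k => Real.exp (-(τ + 2 * k * τm) ^ 2 / 4) with hf
  set g : ℕ → ℝ := fun n => Real.exp (-(2 * (n : ℝ) + 1) ^ 2 * τm ^ 2 / 4) with hg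
  have hgsum : Summable g := pg_aux_g_summable τm hτm
  have hgnn : (0:ℝ) ≤ ∑' n, g n := tsum_nonneg fun n => Real.exp_nonneg _
  -- termwise bounds
  have hpos : ∀ n : ℕ, f (n + 1) ≤ g n := fun n => by
    apply pg_term_le τm hτm τ hτ n (n + 1)
    push_cast; rw [abs_of_nonneg (by positivity)]
  have hneg : ∀ n : ℕ, f (-(n + 1)) ≤ g n := fun n => by
    apply pg_term_le τm hτm τ hτ n (-(n + 1))
    push_cast; rw [abs_neg, abs_of_nonneg (by positivity)]
  have hsum_pos : Summable (fun n : ℕ => f (n + 1)) :=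
    Summable.of_nonneg_of_le (fun n => Real.exp_nonneg _) hpos hgsum
  have hsum_neg : Summable (fun n : ℕ => f (-(n + 1))) :=
    Summable.of_nonneg_of_le (fun n => Real.exp_nonneg _) hneg hgsum
  have hsum_nat : Summable (fun n : ℕ => f n) := by
    rw [← summable_nat_add_iff 1]
    exact_mod_cast hsum_pos
  have htsum : ∑' k : ℤ, f k = (∑' n : ℕ, f n) + ∑' n : ℕ, f (-(n + 1)) :=
    tsum_of_nat_of_neg_add_one hsum_nat hsum_neg
  have hnat : ∑' n : ℕ, f n = f 0 + ∑' n : ℕ, f (n + 1) := by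
    rw [Summable.tsum_eq_zero_add hsum_nat]
    push_cast
    norm_num
  have hf0 : f 0 = Real.exp (-τ ^ 2 / 4) := by simp [hf]
  have key : (∑' k : ℤ, f k) - Real.exp (-τ ^ 2 / 4)
      = (∑' n : ℕ, f (n + 1)) + ∑' n : ℕ, f (-(n + 1)) := by
    rw [htsum, hnat, hf0]; ring
  constructor
  · rw [key]
    have h1 : (0:ℝ) ≤ ∑' n : ℕ, f (n + 1) := tsum_nonneg fun n => Real.exp_nonneg _
    have h2 : (0:ℝ) ≤ ∑' n : ℕ, f (-(n + 1)) := tsum_nonneg fun n => Real.exp_nonneg _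
    linarith
  · rw [key]
    have h1 : ∑' n : ℕ, f (n + 1) ≤ ∑' n, g n := Summable.tsum_le_tsum hpos hsum_pos hgsum
    have h2 : ∑' n : ℕ, f (-(n + 1)) ≤ ∑' n, g n := Summable.tsum_le_tsum hneg hsum_neg hgsum
    linarith
end

section
/- Let τ_m > 0, let N be a natural number, let a_n = (2√π/τ_m)·exp(−n²π²/τ_m²), and let z be a complex number such that n²π² ≠ τ_m²z² for all n = 0, 1, …, N (in particular z ≠ 0). Then (1/√π)·∫_0^{τ_m} ( −a_0/2 + ∑_{n=0}^{N} a_n·cos(nπτ/τ_m) )·exp(izτ) dτ = i·(1 − exp(iτ_m z))/(τ_m z) + (i·τ_m²·z/√π)·∑_{n=1}^{N} a_n·((−1)^n·exp(iτ_m z) − 1)/(n²π² − τ_m²z²). -/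
/-!
Each Fourier mode is integrated exactly: with `ω = nπ/τm`, the function
`e^{izτ} (iz cos ωτ + ω sin ωτ) / (ω² - z²)` is an antiderivative of `cos ωτ · e^{izτ}`, and at
`τ = τm` the cosine is `(-1)ⁿ` while the sine vanishes. The `n = 0` summand together with the
constant `-a₀/2` leaves `(a₀/2) ∫ e^{izτ}`, which for `a₀ = 2√π/τm` is the first term on the right.
-/

open Real

open Complex in
theorem Complex.integral_cos_mul_exp_I_mul {ω z : ℂ} (h : ω ^ 2 ≠ z ^ 2) (b : ℝ) :
    ∫ τ in (0:ℝ)..b, cos (ω * τ) * exp (I * z * τ) =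
      (exp (I * z * b) * (I * z * cos (ω * b) + ω * sin (ω * b)) - I * z) / (ω ^ 2 - z ^ 2) := by
  have hD : ω ^ 2 - z ^ 2 ≠ 0 := sub_ne_zero.mpr h
  have hderiv : ∀ t : ℂ, HasDerivAt
      (fun t => exp (I * z * t) * (I * z * cos (ω * t) + ω * sin (ω * t)) / (ω ^ 2 - z ^ 2))
      (cos (ω * t) * exp (I * z * t)) t := by
    intro t
    have := ((((hasDerivAt_id t).const_mul (I * z)).cexp).mul
      ((((hasDerivAt_id t).const_mul ω).ccos.const_mul (I * z)).add
        (((hasDerivAt_id t).const_mul ω).csin.const_mul ω))).div_const (ω ^ 2 - z ^ 2)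
    simp only [id, Pi.add_apply, mul_one] at this
    refine this.congr_deriv ?_
    rw [div_eq_iff hD]
    linear_combination (cos (ω * t) * exp (I * z * t)) * I_sq * z ^ 2
  rw [intervalIntegral.integral_eq_sub_of_hasDerivAt (fun t _ => (hderiv t).comp_ofReal)
    ((by fun_prop : Continuous fun τ : ℝ => cos (ω * τ) * exp (I * z * τ)).intervalIntegrable _ _)]
  simp only [ofReal_zero, mul_zero, exp_zero, cos_zero, sin_zero, one_mul]
  ring

theorem integral_cos_nat_mul_pi_div_mul_exp_I_mul {L : ℝ} (hL : L ≠ 0) (n : ℕ) {z : ℂ}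
    (h : (n : ℂ) ^ 2 * (π : ℂ) ^ 2 ≠ (L : ℂ) ^ 2 * z ^ 2) :
    ∫ τ in (0:ℝ)..L, (Real.cos (n * π * τ / L) : ℂ) * Complex.exp (Complex.I * z * τ) =
      Complex.I * (L : ℂ) ^ 2 * z * ((-1) ^ n * Complex.exp (Complex.I * L * z) - 1) /
        ((n : ℂ) ^ 2 * (π : ℂ) ^ 2 - (L : ℂ) ^ 2 * z ^ 2) := by
  have hLc : (L : ℂ) ≠ 0 := Complex.ofReal_ne_zero.mpr hL
  set ω : ℂ := n * π / L with hω_def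
  have hω : ω ^ 2 ≠ z ^ 2 := by
    contrapose! h
    rw [hω_def, div_pow] at h
    field_simp at h
    exact h
  have hcos : ∀ τ : ℝ, (Real.cos (n * π * τ / L) : ℂ) = Complex.cos (ω * τ) := fun τ => by
    rw [hω_def]; push_cast; ring_nf
  have hωL : ω * L = (n * π : ℝ) := by rw [hω_def]; push_cast; field_simp
  simp only [hcos, Complex.integral_cos_mul_exp_I_mul hω, hωL, ← Complex.ofReal_cos,
    ← Complex.ofReal_sin, Real.cos_nat_mul_pi, Real.sin_nat_mul_pi]
  rw [hω_def]
  push_cast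
  field_simp
  ring

theorem intervalIntegral.integral_ofReal_add_sum_mul {ι : Type*} {g : ι → ℝ → ℝ} {h : ℝ → ℂ}
    (hg : ∀ i, Continuous (g i)) (hh : Continuous h) (c : ℝ) (a : ι → ℝ) (s : Finset ι)
    (x y : ℝ) :
    ∫ τ in x..y, ((c + ∑ i ∈ s, a i * g i τ : ℝ) : ℂ) * h τ =
      c * (∫ τ in x..y, h τ) + ∑ i ∈ s, (a i : ℂ) * ∫ τ in x..y, (g i τ : ℂ) * h τ := by
  have hgh : ∀ i, Continuous fun τ => (a i : ℂ) * ((g i τ : ℂ) * h τ) := fun i => by fun_prop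
  have hexpand : ∀ τ, ((c + ∑ i ∈ s, a i * g i τ : ℝ) : ℂ) * h τ =
      c * h τ + ∑ i ∈ s, (a i : ℂ) * ((g i τ : ℂ) * h τ) := fun τ => by
    push_cast
    rw [add_mul, Finset.sum_mul]
    simp only [mul_assoc]
  rw [intervalIntegral.integral_congr fun τ _ => hexpand τ,
    intervalIntegral.integral_add ((hh.const_mul _).intervalIntegrable _ _)
      ((continuous_finsetSum _ fun i _ => hgh i).intervalIntegrable _ _),
    intervalIntegral.integral_finsetSum fun i _ => (hgh i).intervalIntegrable _ _]
  simp only [intervalIntegral.integral_const_mul]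

theorem truncated_fourier_integral_eval_general (τm : ℝ) (N : ℕ) (a : ℕ → ℝ)
    (ha : ∀ n : ℕ, a n = (2 * Real.sqrt π / τm) * Real.exp (-(n : ℝ) ^ 2 * π ^ 2 / τm ^ 2))
    (z : ℂ) (hz : ∀ n ≤ N, (n : ℂ) ^ 2 * (π : ℂ) ^ 2 ≠ (τm : ℂ) ^ 2 * z ^ 2) :
    (1 / (Real.sqrt π : ℂ)) *
      ∫ τ in (0:ℝ)..τm,
        ((-(a 0) / 2 +
            ∑ n ∈ Finset.range (N + 1), a n * Real.cos (n * π * τ / τm) : ℝ) : ℂ) *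
          Complex.exp (Complex.I * z * τ) =
      Complex.I * (1 - Complex.exp (Complex.I * (τm : ℂ) * z)) / ((τm : ℂ) * z) +
        (Complex.I * (τm : ℂ) ^ 2 * z / (Real.sqrt π : ℂ)) *
          ∑ n ∈ Finset.Icc 1 N,
            (a n : ℂ) * ((-1) ^ n * Complex.exp (Complex.I * (τm : ℂ) * z) - 1) /
              ((n : ℂ) ^ 2 * (π : ℂ) ^ 2 - (τm : ℂ) ^ 2 * z ^ 2) := by
  obtain ⟨hτc, hz0⟩ : (τm : ℂ) ≠ 0 ∧ z ≠ 0 := by simpa using (hz 0 N.zero_le).symm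
  have hτm : τm ≠ 0 := Complex.ofReal_ne_zero.mp hτc
  have hπ : (Real.sqrt π : ℂ) ≠ 0 := Complex.ofReal_ne_zero.mpr (Real.sqrt_pos.mpr pi_pos).ne'
  have ha0 : (a 0 : ℂ) = 2 * Real.sqrt π / τm := by simp [ha]
  rw [intervalIntegral.integral_ofReal_add_sum_mul (g := fun (n : ℕ) τ => Real.cos (n * π * τ / τm))
      (fun n => by fun_prop) (by fun_prop),
    integral_exp_mul_complex (mul_ne_zero Complex.I_ne_zero hz0),
    Finset.sum_range_eq_add_Ico _ (by omega), Finset.Ico_add_one_right_eq_Icc,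
    Finset.sum_congr rfl fun n hn => by
      rw [integral_cos_nat_mul_pi_div_mul_exp_I_mul hτm n (hz n (Finset.mem_Icc.mp hn).2)],
    integral_cos_nat_mul_pi_div_mul_exp_I_mul hτm 0 (hz 0 N.zero_le)]
  have hsum : ∑ n ∈ Finset.Icc 1 N, (a n : ℂ) *
        (Complex.I * τm ^ 2 * z * ((-1) ^ n * Complex.exp (Complex.I * τm * z) - 1) /
          ((n : ℂ) ^ 2 * π ^ 2 - τm ^ 2 * z ^ 2)) =
      Complex.I * τm ^ 2 * z * ∑ n ∈ Finset.Icc 1 N,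
        (a n : ℂ) * ((-1) ^ n * Complex.exp (Complex.I * τm * z) - 1) /
          ((n : ℂ) ^ 2 * π ^ 2 - τm ^ 2 * z ^ 2) := by
    rw [Finset.mul_sum]
    exact Finset.sum_congr rfl fun n _ => by ring
  rw [hsum, mul_right_comm Complex.I z]
  generalize (∑ n ∈ Finset.Icc 1 N, _ : ℂ) = S
  push_cast
  rw [ha0]
  simp only [mul_zero, Complex.exp_zero, pow_zero, one_mul, zero_pow two_ne_zero, zero_mul, zero_sub]
  field_simp
  rw [Complex.I_sq]
  ring

/-- For `τm > 0`, `N : ℕ`, `aₙ = (2√π/τm)·exp(−n²π²/τm²)` and `z : ℂ` with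
`n²π² ≠ τm²z²` for all `n ≤ N`, the truncated-Fourier integral evaluates exactly:
`(1/√π)·∫_0^{τm} (−a₀/2 + ∑_{n=0}^N aₙ·cos(nπτ/τm))·exp(izτ) dτ
  = i·(1 − exp(iτm z))/(τm z) + (i·τm²·z/√π)·∑_{n=1}^N aₙ·((−1)ⁿ·exp(iτm z) − 1)/(n²π² − τm²z²)`. -/
theorem truncated_fourier_integral_eval (τm : ℝ) (hτm : 0 < τm) (N : ℕ) (a : ℕ → ℝ)
    (ha : ∀ n : ℕ, a n = (2 * Real.sqrt π / τm) * Real.exp (-(n : ℝ) ^ 2 * π ^ 2 / τm ^ 2))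
    (z : ℂ) (hz : ∀ n ≤ N, (n : ℂ) ^ 2 * (π : ℂ) ^ 2 ≠ (τm : ℂ) ^ 2 * z ^ 2) :
    (1 / (Real.sqrt π : ℂ)) *
      ∫ τ in (0:ℝ)..τm,
        ((-(a 0) / 2 +
            ∑ n ∈ Finset.range (N + 1), a n * Real.cos (n * π * τ / τm) : ℝ) : ℂ) *
          Complex.exp (Complex.I * z * τ) =
      Complex.I * (1 - Complex.exp (Complex.I * (τm : ℂ) * z)) / ((τm : ℂ) * z) +
        (Complex.I * (τm : ℂ) ^ 2 * z / (Real.sqrt π : ℂ)) *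
          ∑ n ∈ Finset.Icc 1 N,
            (a n : ℂ) * ((-1) ^ n * Complex.exp (Complex.I * (τm : ℂ) * z) - 1) /
              ((n : ℂ) ^ 2 * (π : ℂ) ^ 2 - (τm : ℂ) ^ 2 * z ^ 2) :=
  truncated_fourier_integral_eval_general τm N a ha z hz
end

section
/- Let τ_m > 0 and let z be a complex number with Im(z) > 0. Then (1/√π)·∫_0^{τ_m} ( ∑_{k∈ℤ} exp(−(τ + 2kτ_m)²/4) )·exp(izτ) dτ = i·(1 − exp(iτ_m z))/(τ_m·z) + 2i·τ_m·z·∑_{n=1}^{∞} exp(−n²π²/τ_m²)·((−1)^n·exp(iτ_m z) − 1)/(n²π² − τ_m²z²), where the series on the right converges absolutely. -/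
/-!
Poisson summation (Jacobi's theta transformation) turns the periodized Gaussian into its Fourier
series `(√π/τm) ∑_{n∈ℤ} exp(−n²π²/τm²) exp(inπτ/τm)`, whose coefficients decay fast enough to
integrate against `exp(izτ)` term by term (`Im z > 0` keeps `|exp(izτ)| ≤ 1` on `[0, τm]`). The
`n`-th integral is elementary, and pairing the terms `n` and `−n` gives the stated series.
-/

open Real MeasureTheory Complex
open scoped Interval

lemma summable_norm_cexp_neg_mul_int_sq {c : ℂ} (hc : 0 < c.re) :
    Summable fun n : ℤ => ‖cexp (-c * n ^ 2)‖ := by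
  have hτ : 0 < (I * c / π).im := by simpa using div_pos hc pi_pos
  refine summable_norm_iff.mpr (((summable_jacobiTheta₂_term_iff 0 _).mpr hτ).congr fun n => ?_)
  rw [jacobiTheta₂_term]
  congr 1
  field_simp
  ring_nf
  rw [I_sq]
  ring

lemma hasSum_intervalIntegral_of_norm_le {ι E : Type*} [Countable ι] [NormedAddCommGroup E]
    [NormedSpace ℝ E] [CompleteSpace E] {F : ι → ℝ → E} {u : ι → ℝ} {a b : ℝ}
    (hF : ∀ i, Continuous (F i)) (hu : Summable u) (hFu : ∀ i, ∀ t ∈ Ι a b, ‖F i t‖ ≤ u i) :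
    HasSum (fun i => ∫ t in a..b, F i t) (∫ t in a..b, ∑' i, F i t) :=
  intervalIntegral.hasSum_integral_of_dominated_convergence (fun i _ => u i)
    (fun i => (hF i).aestronglyMeasurable) (fun i => .of_forall (hFu i))
    (.of_forall fun _ _ => hu) intervalIntegrable_const
    (.of_forall fun t ht => (Summable.of_norm_bounded hu fun i => hFu i t ht).hasSum)

lemma ofReal_add_ofReal_mul_ne_zero {T : ℝ} (hT : T ≠ 0) {z : ℂ} (hz : z.im ≠ 0) (x : ℝ) :
    (x : ℂ) + T * z ≠ 0 := fun h => by
  simpa [hT, hz] using congrArg im h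

noncomputable section

def periodizedGaussian (T τ : ℝ) : ℝ := ∑' k : ℤ, rexp (-(τ + 2 * k * T) ^ 2 / 4)

/-- `(1/√π) ∫₀^T` of the `n`-th Fourier mode of `periodizedGaussian T` times `exp(izτ)`. -/
def periodizedGaussianIntegralTerm (T : ℝ) (z : ℂ) (n : ℤ) : ℂ :=
  cexp (-(n : ℂ) ^ 2 * π ^ 2 / T ^ 2) * ((-1) ^ n * cexp (I * T * z) - 1) /
    (I * (n * π + T * z))

end

lemma periodizedGaussian_eq_tsum {T : ℝ} (hT : 0 < T) (τ : ℝ) :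
    (periodizedGaussian T τ : ℂ) =
      (√π : ℂ) / T *
        ∑' n : ℤ, cexp (-(n : ℂ) ^ 2 * π ^ 2 / T ^ 2) * cexp (I * (n * π / T) * τ) := by
  set a : ℂ := ((T ^ 2 / π : ℝ) : ℂ)
  set b : ℂ := ((-(T * τ) / (2 * π) : ℝ) : ℂ)
  have ha : 0 < a.re := by simp only [a, ofReal_re]; positivity
  have hT' : (T : ℂ) ≠ 0 := ofReal_ne_zero.mpr hT.ne'
  have hsqrt : a ^ (1 / 2 : ℂ) = ((T / √π : ℝ) : ℂ) := by
    rw [show (1 / 2 : ℂ) = ((1 / 2 : ℝ) : ℂ) by norm_num, ← ofReal_cpow (by positivity),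
      ← sqrt_eq_rpow, sqrt_div (sq_nonneg T), sqrt_sq hT.le]
  calc (periodizedGaussian T τ : ℂ)
      = (∑' k : ℤ, cexp (-π * a * k ^ 2 + 2 * π * b * k)) * cexp (-(τ : ℂ) ^ 2 / 4) := by
        rw [periodizedGaussian, ofReal_tsum, ← tsum_mul_right]
        refine tsum_congr fun k => ?_
        rw [ofReal_exp, ← Complex.exp_add]
        congr 1
        push_cast [a, b]
        field_simp
        ring
    _ = 1 / a ^ (1 / 2 : ℂ) *
          ∑' n : ℤ, cexp (-π / a * (n + I * b) ^ 2) * cexp (-(τ : ℂ) ^ 2 / 4) := by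
        rw [tsum_exp_neg_quadratic ha, tsum_mul_right, mul_assoc]
    _ = _ := by
        rw [hsqrt, ofReal_div, one_div_div]
        congr 1
        refine tsum_congr fun n => ?_
        rw [← Complex.exp_add, ← Complex.exp_add]
        congr 1
        push_cast [a, b]
        field_simp
        ring_nf
        rw [I_sq]
        ring

lemma integral_cexp_I_mul_int_mul_pi_div_add {T : ℝ} (hT : T ≠ 0) {z : ℂ} {n : ℤ}
    (h : (n : ℂ) * π + T * z ≠ 0) :
    ∫ τ in (0 : ℝ)..T, cexp (I * (n * π / T + z) * τ) =
      T * ((-1) ^ n * cexp (I * T * z) - 1) / (I * (n * π + T * z)) := by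
  have hT' : (T : ℂ) ≠ 0 := ofReal_ne_zero.mpr hT
  have hw : I * (n * π / T + z) ≠ 0 := by
    rw [div_add' _ _ _ hT', mul_comm z]
    exact mul_ne_zero I_ne_zero (div_ne_zero h hT')
  have hE : cexp (I * (n * π / T + z) * T) = (-1) ^ n * cexp (I * T * z) := by
    rw [← exp_pi_mul_I, ← exp_int_mul, ← Complex.exp_add]
    congr 1
    field_simp
  rw [integral_exp_mul_complex hw, ofReal_zero, mul_zero, Complex.exp_zero, hE]
  field_simp

lemma hasSum_periodizedGaussianIntegralTerm {T : ℝ} (hT : 0 < T) {z : ℂ} (hz : 0 < z.im) :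
    HasSum (periodizedGaussianIntegralTerm T z)
      (1 / (√π : ℂ) * ∫ τ in (0 : ℝ)..T, (periodizedGaussian T τ : ℂ) * cexp (I * z * τ)) := by
  set F : ℤ → ℝ → ℂ := fun n τ =>
    cexp (-(n : ℂ) ^ 2 * π ^ 2 / T ^ 2) * cexp (I * (n * π / T + z) * τ)
  have hT' : (T : ℂ) ≠ 0 := ofReal_ne_zero.mpr hT.ne'
  have hexpand : ∀ τ : ℝ,
      (periodizedGaussian T τ : ℂ) * cexp (I * z * τ) = (√π : ℂ) / T * ∑' n, F n τ := by
    intro τ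
    rw [periodizedGaussian_eq_tsum hT, mul_assoc, ← tsum_mul_right]
    congr 1
    refine tsum_congr fun n => ?_
    rw [mul_assoc, ← Complex.exp_add]
    congr 2
    ring
  have hbound : ∀ n, ∀ τ ∈ Ι 0 T, ‖F n τ‖ ≤ ‖cexp (-(n : ℂ) ^ 2 * π ^ 2 / T ^ 2)‖ := by
    intro n τ hτ
    rw [norm_mul]
    refine mul_le_of_le_one_right (norm_nonneg _) ?_
    rw [norm_exp, Real.exp_le_one_iff]
    simpa using mul_nonneg hz.le (Set.uIoc_of_le hT.le ▸ hτ).1.le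
  have hsummable : Summable fun n : ℤ => ‖cexp (-(n : ℂ) ^ 2 * π ^ 2 / T ^ 2)‖ := by
    refine (summable_norm_cexp_neg_mul_int_sq (c := π ^ 2 / T ^ 2) ?_).congr fun n => ?_
    · rw [← ofReal_pow, ← ofReal_pow, ← ofReal_div, ofReal_re]
      positivity
    · ring_nf
  have hF := hasSum_intervalIntegral_of_norm_le (fun n => by fun_prop) hsummable hbound
  have hterm : ∀ n,
      periodizedGaussianIntegralTerm T z n = 1 / (T : ℂ) * ∫ τ in (0 : ℝ)..T, F n τ := by
    intro n
    have hn := ofReal_add_ofReal_mul_ne_zero hT.ne' hz.ne' ((n : ℝ) * π)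
    push_cast at hn
    rw [intervalIntegral.integral_const_mul, integral_cexp_I_mul_int_mul_pi_div_add hT.ne' hn,
      periodizedGaussianIntegralTerm]
    field_simp
  have hvalue :
      1 / (√π : ℂ) * ∫ τ in (0 : ℝ)..T, (periodizedGaussian T τ : ℂ) * cexp (I * z * τ) =
        1 / (T : ℂ) * ∫ τ in (0 : ℝ)..T, ∑' n, F n τ := by
    rw [intervalIntegral.integral_congr fun τ _ => hexpand τ, intervalIntegral.integral_const_mul]
    field_simp
  rw [funext hterm, hvalue]
  exact hF.mul_left _

lemma periodizedGaussianIntegralTerm_add_neg {T : ℝ} (hT : 0 < T) {z : ℂ} (hz : 0 < z.im)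
    (n : ℕ) :
    periodizedGaussianIntegralTerm T z n + periodizedGaussianIntegralTerm T z (-n) =
      2 * I * T * z * (cexp (-(n : ℂ) ^ 2 * π ^ 2 / T ^ 2) * ((-1) ^ n * cexp (I * T * z) - 1) /
        ((n : ℂ) ^ 2 * π ^ 2 - T ^ 2 * z ^ 2)) := by
  have hplus := ofReal_add_ofReal_mul_ne_zero hT.ne' hz.ne' ((n : ℝ) * π)
  have hminus := ofReal_add_ofReal_mul_ne_zero hT.ne' hz.ne' (-((n : ℝ) * π))
  push_cast at hplus hminus
  have hD : (n : ℂ) ^ 2 * π ^ 2 - T ^ 2 * z ^ 2 ≠ 0 := by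
    convert neg_ne_zero.mpr (mul_ne_zero hplus hminus) using 1
    ring
  simp only [periodizedGaussianIntegralTerm, Int.cast_neg, Int.cast_natCast, zpow_neg,
    zpow_natCast, neg_sq, ← inv_pow, inv_neg, inv_one]
  field_simp
  -- `1/(i(Tz + nπ)) + 1/(i(Tz − nπ)) = 2iTz/(n²π² − T²z²)` because `1/i = −i`
  linear_combination
    (2 * T * z * ((-1) ^ n * cexp (T * I * z) - 1) * (n ^ 2 * π ^ 2 - T ^ 2 * z ^ 2)) * I_sq

lemma periodizedGaussianIntegralTerm_zero (T : ℝ) (z : ℂ) :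
    periodizedGaussianIntegralTerm T z 0 = I * (1 - cexp (I * T * z)) / (T * z) := by
  simp only [periodizedGaussianIntegralTerm, Int.cast_zero, zero_mul, zero_add, zpow_zero,
    one_mul, zero_pow two_ne_zero, neg_zero, zero_div, Complex.exp_zero]
  rw [mul_comm I, ← div_div, div_I, ← neg_sub, neg_mul, neg_neg, mul_comm]

/-- For `τm > 0` and `z : ℂ` with `Im z > 0`,
`(1/√π)·∫_0^{τm} (∑_{k∈ℤ} exp(−(τ + 2kτm)²/4))·exp(izτ) dτ
  = i·(1 − exp(iτm z))/(τm z)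
    + 2i·τm·z·∑_{n=1}^∞ exp(−n²π²/τm²)·((−1)ⁿ·exp(iτm z) − 1)/(n²π² − τm²z²)`,
where the series on the right converges absolutely. -/
theorem periodized_gaussian_integral_Icc (τm : ℝ) (hτm : 0 < τm) (z : ℂ) (hz : 0 < z.im) :
    Summable (fun n : ℕ =>
      ‖Complex.exp (-((n : ℂ) + 1) ^ 2 * (π : ℂ) ^ 2 / (τm : ℂ) ^ 2) *
          ((-1) ^ (n + 1) * Complex.exp (Complex.I * (τm : ℂ) * z) - 1) /
        (((n : ℂ) + 1) ^ 2 * (π : ℂ) ^ 2 - (τm : ℂ) ^ 2 * z ^ 2)‖) ∧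
    (1 / (Real.sqrt π : ℂ)) *
      ∫ τ in (0:ℝ)..τm,
        ((∑' k : ℤ, Real.exp (-(τ + 2 * k * τm) ^ 2 / 4) : ℝ) : ℂ) *
          Complex.exp (Complex.I * z * τ) =
      Complex.I * (1 - Complex.exp (Complex.I * (τm : ℂ) * z)) / ((τm : ℂ) * z) +
        2 * Complex.I * (τm : ℂ) * z *
          ∑' n : ℕ,
            Complex.exp (-((n : ℂ) + 1) ^ 2 * (π : ℂ) ^ 2 / (τm : ℂ) ^ 2) *
                ((-1) ^ (n + 1) * Complex.exp (Complex.I * (τm : ℂ) * z) - 1) /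
              (((n : ℂ) + 1) ^ 2 * (π : ℂ) ^ 2 - (τm : ℂ) ^ 2 * z ^ 2) := by
  have hz0 : z ≠ 0 := fun h => by simp [h] at hz
  have hτz : 2 * I * τm * z ≠ 0 := by simp [hτm.ne', hz0]
  show _ ∧ 1 / (√π : ℂ) * ∫ τ in (0 : ℝ)..τm, (periodizedGaussian τm τ : ℂ) * cexp (I * z * τ) = _
  have hpaired := (hasSum_nat_add_iff' 1).mpr
    (hasSum_periodizedGaussianIntegralTerm hτm hz).nat_add_neg
  simp only [Finset.sum_range_one, periodizedGaussianIntegralTerm_add_neg hτm hz] at hpaired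
  push_cast [zero_pow two_ne_zero, neg_zero, zero_mul, zero_div, Complex.exp_zero] at hpaired
  refine ⟨summable_norm_iff.mpr ((summable_mul_left_iff hτz).mp hpaired.summable), ?_⟩
  rw [← tsum_mul_left, hpaired.tsum_eq, periodizedGaussianIntegralTerm_zero]
  have hτm' : (τm : ℂ) ≠ 0 := ofReal_ne_zero.mpr hτm.ne'
  field_simp
  ring
end

section
/- Let z be a complex number with Im(z) > 0. Then (1/√π)·∫_0^{∞} exp(−τ²/4)·exp(izτ) dτ = exp(−z²) + (2i·z/√π)·∫_0^{1} exp(z²·(t² − 1)) dt. In other words, the integral (1/√π)∫_0^∞ e^{−τ²/4+izτ}dτ equals the Faddeeva function w(z) = e^{−z²}·(1 + (2i/√π)·∫_0^z e^{s²} ds), where the contour integral ∫_0^z e^{s²} ds along the straight segment from 0 to z is parametrized as z·∫_0^1 e^{z²t²} dt. -/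
open Real MeasureTheory

/-!
Substituting `τ = 2u` and completing the square turns the left-hand side into
`2 e^{-z²} ∫_0^∞ e^{-(u+a)²} du` with `a = -iz`. Let `E` be an entire primitive of `e^{-s²}`
(Morera). The integral along the ray `u ↦ u + a` is `lim_{x→∞} E(x + a) - E(a)`, and
`E(x + a) - E(x) → 0` because `e^{-s²}` decays uniformly on the segments `[x, x + a]`; comparing
with the real Gaussian integral gives `√π/2 - (E(a) - E(0))`, and `E(a) - E(0)` is the integral
of `e^{-s²}` along the segment `[0, a]`.
-/

open Set Filter Topology
open scoped Complex Interval

section Primitive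

variable {f E : ℂ → ℂ}

theorem intervalIntegral_mul_comp_add_mul_eq_sub (hE : ∀ s, HasDerivAt E (f s) s)
    (hf : Continuous f) (b a : ℂ) :
    ∫ t in (0:ℝ)..1, a * f (b + a * t) = E (b + a) - E b := by
  have hderiv (t : ℝ) : HasDerivAt (fun t : ℝ => E (b + a * t)) (a * f (b + a * t)) t := by
    have := (hE _).comp (t : ℂ) (((hasDerivAt_id (t : ℂ)).const_mul a).const_add b)
    simpa [mul_comm] using this.comp_ofReal
  rw [intervalIntegral.integral_eq_sub_of_hasDerivAt (fun t _ => hderiv t)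
    ((by fun_prop : Continuous fun t : ℝ => a * f (b + a * t)).intervalIntegrable _ _)]
  simp

theorem tendsto_comp_add_atTop_of_hasDerivAt (hE : ∀ s, HasDerivAt E (f s) s) (a : ℂ)
    (hf : IntegrableOn (fun u : ℝ => f (u + a)) (Ioi 0)) :
    Tendsto (fun x : ℝ => E (x + a)) atTop (𝓝 (E a + ∫ u in Ioi (0:ℝ), f (u + a))) := by
  have hderiv (x : ℝ) : HasDerivAt (fun x : ℝ => E (x + a)) (f (x + a)) x :=
    ((hE _).comp_add_const _ a).comp_ofReal
  have hlim := tendsto_limUnder_of_hasDerivAt_of_integrableOn_Ioi (fun x _ => hderiv x) hf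
  rwa [integral_Ioi_of_hasDerivAt_of_tendsto' (fun x _ => hderiv x) hf hlim, Complex.ofReal_zero,
    zero_add, add_sub_cancel]

end Primitive

theorem norm_cexp_neg_add_sq_le {x r : ℝ} {w : ℂ} (hw : ‖w‖ ≤ r) (hrx : r ≤ x) :
    ‖cexp (-((x : ℂ) + w) ^ 2)‖ ≤ Real.exp (r ^ 2 - (x - r) ^ 2) := by
  have hre : (-((x : ℂ) + w) ^ 2).re = w.im ^ 2 - (x + w.re) ^ 2 := by simp [sq]
  rw [Complex.norm_exp, hre, Real.exp_le_exp]
  have him := (Complex.abs_im_le_norm w).trans hw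
  have hre := abs_le.mp ((Complex.abs_re_le_norm w).trans hw)
  nlinarith [sq_abs w.im, abs_nonneg w.im]

theorem tendsto_exp_sq_sub_sub_sq_atTop (r : ℝ) :
    Tendsto (fun x : ℝ => Real.exp (r ^ 2 - (x - r) ^ 2)) atTop (𝓝 0) :=
  Real.tendsto_exp_atBot.comp <| tendsto_atBot_add_const_left _ _ <|
    tendsto_neg_atTop_atBot.comp <|
      (tendsto_pow_atTop two_ne_zero).comp (tendsto_atTop_add_const_right _ _ tendsto_id)

theorem integrableOn_cexp_neg_add_sq (a : ℂ) :
    IntegrableOn (fun u : ℝ => cexp (-((u : ℂ) + a) ^ 2)) (Ioi 0) := by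
  refine (integrable_cexp_quadratic (b := 1) (by norm_num) (-2 * a) (-a ^ 2)).integrableOn.congr_fun
    (fun u _ => ?_) measurableSet_Ioi
  ring_nf

theorem integral_Ioi_cexp_neg_sq : ∫ u in Ioi (0:ℝ), cexp (-(u : ℂ) ^ 2) = √π / 2 := by
  simpa [← integral_complex_ofReal] using congrArg ((↑) : ℝ → ℂ) (integral_gaussian_Ioi 1)

theorem integral_Ioi_cexp_neg_sq_div_four_mul_cexp (z : ℂ) :
    ∫ τ in Ioi (0:ℝ), cexp (-(τ : ℂ) ^ 2 / 4) * cexp (Complex.I * z * τ) =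
      cexp (-z ^ 2) * (2 * ∫ u in Ioi (0:ℝ), cexp (-((u : ℂ) + -Complex.I * z) ^ 2)) := by
  have hsubst := integral_comp_mul_left_Ioi
    (fun u : ℝ => cexp (-((u : ℂ) + -Complex.I * z) ^ 2)) 0 (inv_pos.2 (two_pos (α := ℝ)))
  rw [mul_zero, inv_inv, Complex.real_smul, Complex.ofReal_ofNat] at hsubst
  rw [← hsubst, ← integral_const_mul]
  refine setIntegral_congr_fun measurableSet_Ioi fun τ _ => ?_
  rw [← Complex.exp_add, ← Complex.exp_add]
  push_cast
  congr 1
  linear_combination z ^ 2 * Complex.I_sq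

section PrimitiveCexpNegSq

variable {E : ℂ → ℂ}

theorem tendsto_sub_comp_add_of_hasDerivAt_cexp_neg_sq (hE : ∀ s, HasDerivAt E (cexp (-s ^ 2)) s)
    (a : ℂ) : Tendsto (fun x : ℝ => E (x + a) - E x) atTop (𝓝 0) := by
  have hbound : ∀ᶠ x : ℝ in atTop,
      ‖E (x + a) - E x‖ ≤ ‖a‖ * Real.exp (‖a‖ ^ 2 - (x - ‖a‖) ^ 2) := by
    filter_upwards [eventually_ge_atTop ‖a‖] with x hx
    have hintegrand : ∀ t ∈ Ι (0:ℝ) 1,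
        ‖a * cexp (-((x : ℂ) + a * t) ^ 2)‖ ≤ ‖a‖ * Real.exp (‖a‖ ^ 2 - (x - ‖a‖) ^ 2) := by
      intro t ht
      rw [uIoc_of_le zero_le_one] at ht
      rw [norm_mul]
      refine mul_le_mul_of_nonneg_left (norm_cexp_neg_add_sq_le ?_ hx) (norm_nonneg a)
      rw [norm_mul, Complex.norm_real, Real.norm_eq_abs, abs_of_pos ht.1]
      exact mul_le_of_le_one_right (norm_nonneg a) ht.2
    simpa [← intervalIntegral_mul_comp_add_mul_eq_sub hE (by fun_prop)] using
      intervalIntegral.norm_integral_le_of_norm_le_const hintegrand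
  refine squeeze_zero_norm' hbound ?_
  simpa using (tendsto_exp_sq_sub_sub_sq_atTop ‖a‖).const_mul ‖a‖

theorem integral_Ioi_cexp_neg_add_sq (hE : ∀ s, HasDerivAt E (cexp (-s ^ 2)) s) (a : ℂ) :
    ∫ u in Ioi (0:ℝ), cexp (-((u : ℂ) + a) ^ 2) = √π / 2 - (E a - E 0) := by
  have ha := tendsto_comp_add_atTop_of_hasDerivAt hE a (integrableOn_cexp_neg_add_sq a)
  have h0 := (tendsto_comp_add_atTop_of_hasDerivAt hE 0 (integrableOn_cexp_neg_add_sq 0)).add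
    (tendsto_sub_comp_add_of_hasDerivAt_cexp_neg_sq hE a)
  simp only [add_zero, integral_Ioi_cexp_neg_sq, add_sub_cancel] at h0
  linear_combination tendsto_nhds_unique ha h0

theorem sub_eq_neg_I_mul_integral_of_hasDerivAt_cexp_neg_sq
    (hE : ∀ s, HasDerivAt E (cexp (-s ^ 2)) s) (z : ℂ) :
    E (-Complex.I * z) - E 0 =
      -Complex.I * z * ∫ t in (0:ℝ)..1, cexp (z ^ 2 * (t : ℂ) ^ 2) := by
  have hsegment := intervalIntegral_mul_comp_add_mul_eq_sub hE (by fun_prop) 0 (-Complex.I * z)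
  rw [zero_add] at hsegment
  rw [← hsegment, ← intervalIntegral.integral_const_mul]
  refine intervalIntegral.integral_congr fun t _ => ?_
  simp only [zero_add]
  congr 2
  linear_combination (-(z ^ 2 * (t : ℂ) ^ 2)) * Complex.I_sq

end PrimitiveCexpNegSq

theorem faddeeva_integral_rep_general (z : ℂ) :
    (1 / (Real.sqrt π : ℂ)) *
      ∫ τ in Set.Ioi (0:ℝ),
        Complex.exp (-(τ : ℂ) ^ 2 / 4) * Complex.exp (Complex.I * z * τ) =
      Complex.exp (-z ^ 2) +
        (2 * Complex.I * z / (Real.sqrt π : ℂ)) *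
          ∫ t in (0:ℝ)..1, Complex.exp (z ^ 2 * ((t : ℂ) ^ 2 - 1)) ∧
    (1 / (Real.sqrt π : ℂ)) *
      ∫ τ in Set.Ioi (0:ℝ),
        Complex.exp (-(τ : ℂ) ^ 2 / 4) * Complex.exp (Complex.I * z * τ) =
      Complex.exp (-z ^ 2) *
        (1 + (2 * Complex.I / (Real.sqrt π : ℂ)) *
          (z * ∫ t in (0:ℝ)..1, Complex.exp (z ^ 2 * (t : ℂ) ^ 2))) := by
  obtain ⟨E, hE⟩ := (by fun_prop : Differentiable ℂ fun s : ℂ => cexp (-s ^ 2)).isExactOn_univ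
  replace hE (s : ℂ) := hE s (mem_univ s)
  have hshift : ∫ t in (0:ℝ)..1, cexp (z ^ 2 * ((t : ℂ) ^ 2 - 1)) =
      cexp (-z ^ 2) * ∫ t in (0:ℝ)..1, cexp (z ^ 2 * (t : ℂ) ^ 2) := by
    rw [← intervalIntegral.integral_const_mul]
    refine intervalIntegral.integral_congr fun t _ => ?_
    rw [← Complex.exp_add]
    ring_nf
  have hpi : (√π : ℂ) ≠ 0 := Complex.ofReal_ne_zero.2 (Real.sqrt_pos.2 pi_pos).ne'
  rw [integral_Ioi_cexp_neg_sq_div_four_mul_cexp, integral_Ioi_cexp_neg_add_sq hE,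
    sub_eq_neg_I_mul_integral_of_hasDerivAt_cexp_neg_sq hE, hshift]
  constructor <;> field_simp <;> ring

/-- For `z : ℂ` with `Im z > 0`,
`(1/√π)·∫_0^∞ exp(−τ²/4)·exp(izτ) dτ = exp(−z²) + (2iz/√π)·∫_0^1 exp(z²(t² − 1)) dt`;
in other words, it equals the Faddeeva function
`w(z) = e^{−z²}·(1 + (2i/√π)·z·∫_0^1 e^{z²t²} dt)`. -/
theorem faddeeva_integral_rep (z : ℂ) (hz : 0 < z.im) :
    (1 / (Real.sqrt π : ℂ)) *
      ∫ τ in Set.Ioi (0:ℝ),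
        Complex.exp (-(τ : ℂ) ^ 2 / 4) * Complex.exp (Complex.I * z * τ) =
      Complex.exp (-z ^ 2) +
        (2 * Complex.I * z / (Real.sqrt π : ℂ)) *
          ∫ t in (0:ℝ)..1, Complex.exp (z ^ 2 * ((t : ℂ) ^ 2 - 1)) ∧
    (1 / (Real.sqrt π : ℂ)) *
      ∫ τ in Set.Ioi (0:ℝ),
        Complex.exp (-(τ : ℂ) ^ 2 / 4) * Complex.exp (Complex.I * z * τ) =
      Complex.exp (-z ^ 2) *
        (1 + (2 * Complex.I / (Real.sqrt π : ℂ)) *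
          (z * ∫ t in (0:ℝ)..1, Complex.exp (z ^ 2 * (t : ℂ) ^ 2))) :=
  faddeeva_integral_rep_general z
end

section
/- Let τ_m > 0, set h = π/τ_m, and let z be a complex number with Re(z) > 0. Then (1/√π)·∫_0^{∞} ( ∑_{k∈ℤ} exp(−(τ + 2kτ_m)²/4) )·exp(−zτ) dτ = (h·z/π)·( 1/z² + 2·∑_{n=1}^{∞} exp(−n²h²)/(n²h² + z²) ), where the series converges absolutely. -/
/-! Poisson summation (Jacobi's transformation of the theta function) turns the periodized
Gaussian into its Fourier series `(√π / τm) ∑ₙ exp(-n²h²) exp(inhτ)`. Its coefficients are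
absolutely summable, so the Laplace transform can be taken termwise, with
`∫₀^∞ exp(inhτ) exp(-zτ) dτ = 1 / (z - inh)`. The coefficients are even in `n`, and pairing the
terms `±n` through `1 / (z - inh) + 1 / (z + inh) = 2z / (n²h² + z²)` gives the right-hand side. -/

open Real MeasureTheory Complex

theorem tsum_int_eq_zero_add_tsum_add_one_add_neg {E : Type*} [AddCommGroup E] [UniformSpace E]
    [IsUniformAddGroup E] [CompleteSpace E] [T2Space E] {f : ℤ → E} (hf : Summable f) :
    ∑' n, f n = f 0 + ∑' n : ℕ, (f (n + 1) + f (-(n + 1))) := by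
  obtain ⟨hnat, hneg⟩ := summable_int_iff_summable_nat_and_neg.mp hf
  have hpos : Summable fun n : ℕ => f (n + 1) := by
    simpa using (summable_nat_add_iff 1).mpr hnat
  have hneg' : Summable fun n : ℕ => f (-(n + 1)) := by
    simpa using (summable_nat_add_iff 1).mpr hneg
  rw [tsum_of_add_one_of_neg_add_one hpos hneg', hpos.tsum_add hneg']
  abel

namespace Complex

theorem abs_re_le_norm_add_I_mul (z : ℂ) (c : ℝ) : |z.re| ≤ ‖z + I * c‖ := by
  simpa using abs_re_le_norm (z + I * c)

theorem sq_add_sq_eq_sub_I_mul_mul_add_I_mul (z c : ℂ) :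
    c ^ 2 + z ^ 2 = (z - I * c) * (z + I * c) := by
  linear_combination c ^ 2 * I_sq

theorem re_sq_le_norm_ofReal_sq_add_sq (z : ℂ) (c : ℝ) : z.re ^ 2 ≤ ‖(c : ℂ) ^ 2 + z ^ 2‖ := by
  rw [sq_add_sq_eq_sub_I_mul_mul_add_I_mul, norm_mul, sub_eq_add_neg, ← mul_neg, ← ofReal_neg,
    ← sq_abs, sq]
  gcongr <;> exact abs_re_le_norm_add_I_mul _ _

theorem div_sub_I_mul_add_div_add_I_mul {z : ℂ} (hz : z.re ≠ 0) (a : ℂ) (c : ℝ) :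
    a / (z - I * c) + a / (z + I * c) = 2 * z * (a / (c ^ 2 + z ^ 2)) := by
  have hadd : ∀ c : ℝ, z + I * c ≠ 0 := fun c h => by
    simpa [h] using (abs_pos.mpr hz).trans_le (abs_re_le_norm_add_I_mul z c)
  have hsub : z - I * c ≠ 0 := by simpa [sub_eq_add_neg] using hadd (-c)
  rw [sq_add_sq_eq_sub_I_mul_mul_add_I_mul]
  field_simp [hadd c, hsub]
  ring

theorem tsum_div_sub_I_mul_eq_of_even {a : ℤ → ℂ} (ha : ∀ n, a (-n) = a n) {z : ℂ}
    (hz : z.re ≠ 0) (ω : ℝ) (hs : Summable fun n : ℤ => a n / (z - I * (n * ω : ℝ))) :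
    ∑' n : ℤ, a n / (z - I * (n * ω : ℝ)) =
      a 0 / z + 2 * z * ∑' n : ℕ, a (n + 1) / (((n : ℂ) + 1) ^ 2 * ω ^ 2 + z ^ 2) := by
  rw [tsum_int_eq_zero_add_tsum_add_one_add_neg hs, ← tsum_mul_left]
  congr 1
  · simp
  refine tsum_congr fun n => ?_
  have := div_sub_I_mul_add_div_add_I_mul hz (a (n + 1)) ((n + 1) * ω)
  rw [ha]
  push_cast at this ⊢
  linear_combination this

theorem summable_norm_cexp_neg_int_sq_mul_sq {h : ℝ} (hh : h ≠ 0) :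
    Summable fun n : ℤ => ‖cexp (-(n : ℂ) ^ 2 * h ^ 2)‖ := by
  have hnat : Summable fun n : ℕ => ‖cexp (-(n : ℂ) ^ 2 * h ^ 2)‖ := by
    refine (summable_exp_nat_mul_of_ge (neg_neg_of_pos (by positivity : 0 < h ^ 2))
      (f := fun n : ℕ => (n : ℝ) ^ 2) fun n => ?_).congr fun n => ?_
    · exact_mod_cast Nat.le_self_pow two_ne_zero n
    · rw [show -(n : ℂ) ^ 2 * h ^ 2 = ((-h ^ 2 * n ^ 2 : ℝ) : ℂ) by push_cast; ring,
        norm_exp_ofReal]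
  exact .of_nat_of_neg (by simpa using hnat) (by simpa using hnat)

theorem summable_norm_cexp_neg_sq_mul_sq_div {h : ℝ} (hh : h ≠ 0) {z : ℂ} (hz : z.re ≠ 0) :
    Summable fun n : ℕ =>
      ‖cexp (-((n : ℂ) + 1) ^ 2 * h ^ 2) / (((n : ℂ) + 1) ^ 2 * h ^ 2 + z ^ 2)‖ := by
  have hsucc : Summable fun n : ℕ => ‖cexp (-((n : ℂ) + 1) ^ 2 * h ^ 2)‖ := by
    simpa using (summable_nat_add_iff 1).mpr
      (summable_int_iff_summable_nat_and_neg.mp (summable_norm_cexp_neg_int_sq_mul_sq hh)).1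
  refine .of_nonneg_of_le (fun _ => norm_nonneg _) (fun n => ?_) (hsucc.div_const (z.re ^ 2))
  rw [norm_div]
  gcongr
  simpa [mul_pow] using re_sq_le_norm_ofReal_sq_add_sq z ((n + 1) * h)

theorem hasSum_integral_Ioi_tsum_mul_cexp_neg {ι : Type*} [Countable ι] {c : ι → ℂ}
    (hc : Summable fun i => ‖c i‖) (ω : ι → ℝ) {z : ℂ} (hz : 0 < z.re) :
    HasSum (fun i => c i / (z - I * ω i))
      (∫ τ in Set.Ioi (0 : ℝ), (∑' i, c i * cexp (I * ω i * τ)) * cexp (-z * τ)) := by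
  have hre : ∀ i, (I * ω i - z).re < 0 := fun i => by simpa using hz
  have hexp : ∀ i (τ : ℝ), cexp (I * ω i * τ) * cexp (-z * τ) = cexp ((I * ω i - z) * τ) :=
    fun i τ => by rw [← Complex.exp_add]; congr 1; ring
  have hterm : ∀ i, ∫ τ in Set.Ioi (0 : ℝ), c i * cexp ((I * ω i - z) * τ) = c i / (z - I * ω i) :=
    fun i => by
      rw [integral_const_mul, integral_exp_mul_complex_Ioi (hre i), ofReal_zero, mul_zero,
        Complex.exp_zero, ← neg_sub z, div_neg, neg_div, neg_neg, mul_one_div]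
  have hnorm : ∀ i, ∫ τ in Set.Ioi (0 : ℝ), ‖c i * cexp ((I * ω i - z) * τ)‖ =
      ‖c i‖ * ∫ τ in Set.Ioi (0 : ℝ), rexp (-z.re * τ) := fun i => by
    rw [← integral_const_mul]
    congr 1 with τ
    simp [norm_exp]
  simp_rw [← tsum_mul_right, mul_assoc (c _), hexp, ← hterm]
  exact hasSum_integral_of_summable_integral_norm
    (fun i => (integrableOn_exp_mul_complex_Ioi (hre i) 0).const_mul (c i))
    (by simpa only [hnorm] using hc.mul_right _)

end Complex

theorem tsum_exp_neg_add_mul_sq_div_four_eq_tsum_fourier {T : ℝ} (hT : 0 < T) (τ : ℝ) :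
    ((∑' k : ℤ, rexp (-(τ + 2 * k * T) ^ 2 / 4) : ℝ) : ℂ) =
      ∑' n : ℤ, ((√π / T : ℝ) : ℂ) * cexp (-(n : ℂ) ^ 2 * ((π / T : ℝ) : ℂ) ^ 2) *
        cexp (I * ((n * (π / T) : ℝ) : ℂ) * τ) := by
  set a : ℝ := T ^ 2 / π
  set b : ℝ := -(T * τ) / (2 * π)
  have ha : 0 < a := by positivity
  have hsqrt : 1 / (a : ℂ) ^ (1 / 2 : ℂ) = ((√π / T : ℝ) : ℂ) := by
    rw [← ofReal_one, ← ofReal_ofNat, ← ofReal_div, ← ofReal_cpow ha.le, ← ofReal_div,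
      ← sqrt_eq_rpow, sqrt_div' _ pi_pos.le, sqrt_sq hT.le, one_div_div]
  have hT0 : (T : ℂ) ≠ 0 := ofReal_ne_zero.mpr hT.ne'
  have hπ0 : (π : ℂ) ≠ 0 := ofReal_ne_zero.mpr pi_pos.ne'
  calc ((∑' k : ℤ, rexp (-(τ + 2 * k * T) ^ 2 / 4) : ℝ) : ℂ)
      = ∑' k : ℤ, cexp (-(τ : ℂ) ^ 2 / 4) * cexp (-π * a * k ^ 2 + 2 * π * b * k) := by
        rw [ofReal_tsum]
        congr with k
        rw [ofReal_exp, ← Complex.exp_add]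
        congr 1
        push_cast [a, b]
        field_simp
        ring
    _ = cexp (-(τ : ℂ) ^ 2 / 4) * (1 / (a : ℂ) ^ (1 / 2 : ℂ) *
          ∑' n : ℤ, cexp (-π / a * (n + I * b) ^ 2)) := by
        rw [tsum_mul_left, Complex.tsum_exp_neg_quadratic (by simpa using ha)]
    _ = _ := by
        rw [hsqrt, ← tsum_mul_left, ← tsum_mul_left]
        congr with n
        rw [mul_left_comm, mul_assoc, ← Complex.exp_add, ← Complex.exp_add]
        congr 2
        push_cast [a, b]
        field_simp
        linear_combination -4 * (τ : ℂ) ^ 2 * T ^ 2 * I_sq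

/-- For `τm > 0`, `h = π/τm` and `z : ℂ` with `Re z > 0`,
`(1/√π)·∫_0^∞ (∑_{k∈ℤ} exp(−(τ + 2kτm)²/4))·exp(−zτ) dτ
  = (h·z/π)·(1/z² + 2·∑_{n=1}^∞ exp(−n²h²)/(n²h² + z²))`,
where the series converges absolutely. -/
theorem erfc_series_identity (τm : ℝ) (hτm : 0 < τm) (h : ℝ) (hh : h = π / τm)
    (z : ℂ) (hz : 0 < z.re) :
    Summable (fun n : ℕ =>
      ‖Complex.exp (-((n : ℂ) + 1) ^ 2 * (h : ℂ) ^ 2) /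
        (((n : ℂ) + 1) ^ 2 * (h : ℂ) ^ 2 + z ^ 2)‖) ∧
    (1 / (Real.sqrt π : ℂ)) *
      ∫ τ in Set.Ioi (0:ℝ),
        ((∑' k : ℤ, Real.exp (-(τ + 2 * k * τm) ^ 2 / 4) : ℝ) : ℂ) *
          Complex.exp (-z * τ) =
      ((h : ℂ) * z / (π : ℂ)) *
        (1 / z ^ 2 +
          2 * ∑' n : ℕ,
            Complex.exp (-((n : ℂ) + 1) ^ 2 * (h : ℂ) ^ 2) /
              (((n : ℂ) + 1) ^ 2 * (h : ℂ) ^ 2 + z ^ 2)) := by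
  have hh0 : h ≠ 0 := hh ▸ (div_pos pi_pos hτm).ne'
  refine ⟨summable_norm_cexp_neg_sq_mul_sq_div hh0 hz.ne', ?_⟩
  set a : ℤ → ℂ := fun n => ((√π / τm : ℝ) : ℂ) * cexp (-(n : ℂ) ^ 2 * h ^ 2)
  have ha : Summable fun n => ‖a n‖ := by
    simpa only [a, norm_mul] using (summable_norm_cexp_neg_int_sq_mul_sq hh0).mul_left _
  have hlaplace := hasSum_integral_Ioi_tsum_mul_cexp_neg ha (fun n : ℤ => n * h) hz
  simp_rw [tsum_exp_neg_add_mul_sq_div_four_eq_tsum_fourier hτm]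
  rw [← hh, ← hlaplace.tsum_eq,
    tsum_div_sub_I_mul_eq_of_even (fun n => by simp [a]) hz.ne' h hlaplace.summable]
  simp only [a, Int.cast_add, Int.cast_natCast, Int.cast_one, Int.cast_zero, mul_div_assoc,
    tsum_mul_left, zero_pow two_ne_zero, neg_zero, zero_mul, Complex.exp_zero]
  generalize ∑' n : ℕ, cexp (-((n : ℂ) + 1) ^ 2 * (h : ℂ) ^ 2) /
    (((n : ℂ) + 1) ^ 2 * (h : ℂ) ^ 2 + z ^ 2) = S
  have hz0 : z ≠ 0 := by rintro rfl; simp at hz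
  have hπ0 : (√π : ℂ) ≠ 0 := by norm_cast; positivity
  have hτm0 : (τm : ℂ) ≠ 0 := by norm_cast; positivity
  rw [hh]
  push_cast
  field_simp
end
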